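/- Let d be a nonzero complex number with 2d² + 1 ≠ 0, and define the 2×2 complex matrices A_d = [[(d²+1)/d, d³/(2d²+1)], [(2d²+1)/d, d]] and B_d = [[(d²+1)/d, −d³/(2d²+1)], [−(2d²+1)/d, d]]. Then det(A_d) = 1, det(B_d) = 1, and the trace of the commutator A_d·B_d·A_d⁻¹·B_d⁻¹ equals −2, i.e. the commutator is parabolic. -/

import Mathlib

/-!
By the Fricke identity, for `A, B ∈ SL(2)` with `x = tr A`, `y = tr B`, `z = tr AB` one has
`tr [A, B] = x² + y² + z² - xyz - 2`. The Earle generators have `x = y = (2d² + 1)/d` and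
`z = (2d² + 1)/d²`, which solve the Markov-type equation `x² + y² + z² = xyz`; hence the commutator
has trace `-2`.
-/

open Matrix

namespace Matrix

variable {R : Type*} [CommRing R]

theorem inv_eq_adjugate_of_det_eq_one {n : Type*} [Fintype n] [DecidableEq n]
    {A : Matrix n n R} (hA : A.det = 1) : A⁻¹ = A.adjugate := by
  rw [inv_def, hA, Ring.inverse_one, one_smul]

theorem trace_mul_mul_adjugate_mul_adjugate_fin_two (A B : Matrix (Fin 2) (Fin 2) R) :
    (A * B * A.adjugate * B.adjugate).trace =
      A.trace ^ 2 * B.det + B.trace ^ 2 * A.det + (A * B).trace ^ 2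
        - A.trace * B.trace * (A * B).trace - 2 * A.det * B.det := by
  rw [adjugate_fin_two, adjugate_fin_two, A.eta_fin_two, B.eta_fin_two]
  simp only [trace_fin_two_of, det_fin_two_of, mul_fin_two, of_apply, cons_val', cons_val_zero,
    cons_val_one, empty_val', cons_val_fin_one, Fin.isValue]
  ring

theorem trace_commutator_fin_two_of_det_eq_one {A B : Matrix (Fin 2) (Fin 2) R}
    (hA : A.det = 1) (hB : B.det = 1) :
    (A * B * A⁻¹ * B⁻¹).trace =
      A.trace ^ 2 + B.trace ^ 2 + (A * B).trace ^ 2 - A.trace * B.trace * (A * B).trace - 2 := by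
  rw [inv_eq_adjugate_of_det_eq_one hA, inv_eq_adjugate_of_det_eq_one hB,
    trace_mul_mul_adjugate_mul_adjugate_fin_two, hA, hB]
  ring

end Matrix

section Earle

variable {K : Type*} [Field K]

def earleA (d : K) : Matrix (Fin 2) (Fin 2) K :=
  !![(d ^ 2 + 1) / d, d ^ 3 / (2 * d ^ 2 + 1); (2 * d ^ 2 + 1) / d, d]

def earleB (d : K) : Matrix (Fin 2) (Fin 2) K :=
  !![(d ^ 2 + 1) / d, -(d ^ 3 / (2 * d ^ 2 + 1)); -((2 * d ^ 2 + 1) / d), d]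

variable {d : K}

theorem earle_offDiag_mul (hd : d ≠ 0) (hd2 : 2 * d ^ 2 + 1 ≠ 0) :
    d ^ 3 / (2 * d ^ 2 + 1) * ((2 * d ^ 2 + 1) / d) = d ^ 2 := by
  rw [div_mul_div_cancel₀ hd2, pow_succ, mul_div_cancel_right₀ _ hd]

theorem det_earleA (hd : d ≠ 0) (hd2 : 2 * d ^ 2 + 1 ≠ 0) : (earleA d).det = 1 := by
  rw [earleA, det_fin_two_of, div_mul_cancel₀ _ hd, earle_offDiag_mul hd hd2]
  ring

theorem det_earleB (hd : d ≠ 0) (hd2 : 2 * d ^ 2 + 1 ≠ 0) : (earleB d).det = 1 := by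
  rw [earleB, det_fin_two_of, div_mul_cancel₀ _ hd, neg_mul_neg, earle_offDiag_mul hd hd2]
  ring

theorem trace_earleA (hd : d ≠ 0) : (earleA d).trace = (2 * d ^ 2 + 1) / d := by
  rw [earleA, trace_fin_two_of]
  field_simp
  ring

theorem trace_earleB (hd : d ≠ 0) : (earleB d).trace = (2 * d ^ 2 + 1) / d := by
  rw [earleB, trace_fin_two_of]
  field_simp
  ring

theorem trace_earleA_mul_earleB (hd : d ≠ 0) (hd2 : 2 * d ^ 2 + 1 ≠ 0) :
    (earleA d * earleB d).trace = (2 * d ^ 2 + 1) / d ^ 2 := by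
  rw [earleA, earleB, mul_fin_two, trace_fin_two_of, mul_neg, mul_neg,
    mul_comm ((2 * d ^ 2 + 1) / d), earle_offDiag_mul hd hd2]
  field_simp
  ring

end Earle

/-- The Earle slice generators A_d, B_d have determinant 1 and parabolic
    commutator: Tr(A_d B_d A_d⁻¹ B_d⁻¹) = −2. -/
theorem earle_generators_det_and_parabolic_commutator
    (d : ℂ) (hd : d ≠ 0) (hd2 : 2 * d ^ 2 + 1 ≠ 0)
    (A B : Matrix (Fin 2) (Fin 2) ℂ)
    (hA : A = !![(d ^ 2 + 1) / d, d ^ 3 / (2 * d ^ 2 + 1);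
                 (2 * d ^ 2 + 1) / d, d])
    (hB : B = !![(d ^ 2 + 1) / d, -(d ^ 3 / (2 * d ^ 2 + 1));
                 -((2 * d ^ 2 + 1) / d), d]) :
    A.det = 1 ∧ B.det = 1 ∧ (A * B * A⁻¹ * B⁻¹).trace = -2 := by
  obtain rfl : A = earleA d := hA
  obtain rfl : B = earleB d := hB
  refine ⟨det_earleA hd hd2, det_earleB hd hd2, ?_⟩
  rw [trace_commutator_fin_two_of_det_eq_one (det_earleA hd hd2) (det_earleB hd hd2),
    trace_earleA hd, trace_earleB hd, trace_earleA_mul_earleB hd hd2]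
  field_simp
  ring
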